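/- In the free unital associative ring ℤ⟨X⟩, for every permutation σ of {1,2,3,4,5} and all elements a₁,...,a₅, one has [a₁,a₂,a₃][a₄,a₅] ≡ sgn(σ)·[a_{σ(1)},a_{σ(2)},a_{σ(3)}][a_{σ(4)},a_{σ(5)}] modulo the ideal T⁽⁴⁾. -/

import Mathlib

noncomputable section

/-- `ℤ⟨X⟩`, the free unital associative ring on a countable set `X = {x₀, x₁, …}`. -/
abbrev R : Type := FreeAlgebra ℤ ℕ

/-- The commutator `[a,b] = ab - ba`. -/
def br (a b : R) : R := a * b - b * a

/-- `T⁽⁴⁾`: the two-sided ideal generated by all left-normed commutators of length 4. -/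
def T4 : TwoSidedIdeal R := TwoSidedIdeal.span {y | ∃ a b c d : R, y = br (br (br a b) c) d}

/-! Modulo `T⁽⁴⁾` every triple commutator is central. Expanding the four-fold commutators
`[[a, b], c c', d]` and `[[a a', b], c, d]` by the Leibniz rule then shows that
`[a₁, a₂, a₃][a₄, a₅]` changes sign under the transpositions `(3 4)` and `(1 3)`; together with
the evident antisymmetries under `(1 2)` and `(4 5)` these generate `S₅`. The argument runs in
any ring in which all four-fold commutators vanish, and is applied to `ℤ⟨X⟩ ⧸ T⁽⁴⁾`. -/

namespace Ring

variable {A : Type*} [Ring A]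

theorem lie_mul (x y z : A) : ⁅x, y * z⁆ = ⁅x, y⁆ * z + y * ⁅x, z⁆ := by
  simp only [lie_def]; noncomm_ring

theorem mul_lie (x y z : A) : ⁅x * y, z⁆ = x * ⁅y, z⁆ + ⁅x, z⁆ * y := by
  simp only [lie_def]; noncomm_ring

end Ring

section LieNilpotent

variable {A : Type*} [Ring A]

attribute [local instance] LieRing.ofAssociativeRing

theorem lie_lie_mul_lie_swap₁₂ (a b c d e : A) :
    ⁅⁅a, b⁆, c⁆ * ⁅d, e⁆ = -(⁅⁅b, a⁆, c⁆ * ⁅d, e⁆) := by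
  rw [← lie_skew b a, neg_lie, neg_mul, neg_neg]

theorem lie_lie_mul_lie_swap₄₅ (a b c d e : A) :
    ⁅⁅a, b⁆, c⁆ * ⁅d, e⁆ = -(⁅⁅a, b⁆, c⁆ * ⁅e, d⁆) := by
  rw [← lie_skew e d, mul_neg, neg_neg]

theorem commute_lie_lie (h : ∀ a b c d : A, ⁅⁅⁅a, b⁆, c⁆, d⁆ = 0) (a b c x : A) :
    Commute ⁅⁅a, b⁆, c⁆ x :=
  commute_iff_lie_eq.2 (h a b c x)

theorem lie_lie_mul_lie_swap₃₄ (h : ∀ a b c d : A, ⁅⁅⁅a, b⁆, c⁆, d⁆ = 0) (a b c d e : A) :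
    ⁅⁅a, b⁆, c⁆ * ⁅d, e⁆ = -(⁅⁅a, b⁆, d⁆ * ⁅c, e⁆) := by
  have hzero := h a b (c * d) e
  rw [Ring.lie_mul, add_lie, Ring.mul_lie, Ring.mul_lie, h, h, zero_mul, mul_zero, zero_add,
    add_zero, (commute_lie_lie h a b d ⁅c, e⁆).eq.symm] at hzero
  exact eq_neg_of_add_eq_zero_left hzero

theorem lie_lie_mul_lie_rotate (h : ∀ a b c d : A, ⁅⁅⁅a, b⁆, c⁆, d⁆ = 0) (a b c d e : A) :
    ⁅⁅a, b⁆, c⁆ * ⁅d, e⁆ = ⁅⁅a, b⁆, d⁆ * ⁅e, c⁆ := by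
  rw [lie_lie_mul_lie_swap₃₄ h, lie_lie_mul_lie_swap₄₅ _ _ _ c, neg_neg]

theorem lie_lie_mul_lie_swap₃₅ (h : ∀ a b c d : A, ⁅⁅⁅a, b⁆, c⁆, d⁆ = 0) (a b c d e : A) :
    ⁅⁅a, b⁆, c⁆ * ⁅d, e⁆ = -(⁅⁅a, b⁆, e⁆ * ⁅d, c⁆) := by
  rw [lie_lie_mul_lie_rotate h, lie_lie_mul_lie_swap₃₄ h]

theorem lie_lie_mul_lie_swap₁₃ (h : ∀ a b c d : A, ⁅⁅⁅a, b⁆, c⁆, d⁆ = 0) (a b c d e : A) :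
    ⁅⁅a, b⁆, c⁆ * ⁅d, e⁆ = -(⁅⁅c, b⁆, a⁆ * ⁅d, e⁆) := by
  have hzero := h (a * c) d b e
  have expand : ⁅⁅⁅a * c, d⁆, b⁆, e⁆ = a * ⁅⁅⁅c, d⁆, b⁆, e⁆ + ⁅⁅⁅a, d⁆, b⁆, e⁆ * c
      + (⁅a, e⁆ * ⁅⁅c, d⁆, b⁆ + ⁅a, b⁆ * ⁅⁅c, d⁆, e⁆)
      + (⁅⁅a, b⁆, e⁆ * ⁅c, d⁆ + ⁅a, d⁆ * ⁅⁅c, b⁆, e⁆)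
      + (⁅⁅a, d⁆, e⁆ * ⁅c, b⁆ + ⁅⁅a, d⁆, b⁆ * ⁅c, e⁆) := by
    simp only [Ring.lie_def]; noncomm_ring
  have h₁ : ⁅a, e⁆ * ⁅⁅c, d⁆, b⁆ + ⁅a, b⁆ * ⁅⁅c, d⁆, e⁆ = 0 := by
    rw [← (commute_lie_lie h c d b _).eq, ← (commute_lie_lie h c d e _).eq,
      lie_lie_mul_lie_swap₃₅ h, neg_add_cancel]
  have h₂ : ⁅⁅a, d⁆, e⁆ * ⁅c, b⁆ + ⁅⁅a, d⁆, b⁆ * ⁅c, e⁆ = 0 := by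
    rw [lie_lie_mul_lie_swap₃₅ h, neg_add_cancel]
  -- up to rotating the last three entries, the surviving pair is the claimed relation
  rw [expand, h, h, h₁, h₂, mul_zero, zero_mul, ← (commute_lie_lie h c b e _).eq,
    ← lie_lie_mul_lie_rotate h a b d, ← lie_lie_mul_lie_rotate h,
    lie_lie_mul_lie_rotate h c b e] at hzero
  simp only [zero_add, add_zero] at hzero
  exact eq_neg_of_add_eq_zero_left hzero

theorem lie_lie_mul_lie_swap₂₃ (h : ∀ a b c d : A, ⁅⁅⁅a, b⁆, c⁆, d⁆ = 0) (a b c d e : A) :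
    ⁅⁅a, b⁆, c⁆ * ⁅d, e⁆ = -(⁅⁅a, c⁆, b⁆ * ⁅d, e⁆) := by
  rw [lie_lie_mul_lie_swap₁₂, lie_lie_mul_lie_swap₁₃ h, lie_lie_mul_lie_swap₁₂ c, neg_neg]

def lieLieMulLie (a : Fin 5 → A) : A := ⁅⁅a 0, a 1⁆, a 2⁆ * ⁅a 3, a 4⁆

theorem lieLieMulLie_comp_swap (h : ∀ a b c d : A, ⁅⁅⁅a, b⁆, c⁆, d⁆ = 0) (a : Fin 5 → A)
    (i : Fin 4) : lieLieMulLie (a ∘ Equiv.swap i.castSucc i.succ) = -lieLieMulLie a := by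
  match i with
  | 0 | 1 | 2 | 3 =>
    simp +decide only [lieLieMulLie, Function.comp_apply, Equiv.swap_apply_def, Fin.reduceCastSucc,
      Fin.reduceSucc, Fin.isValue, ite_true, ite_false]
    refine (neg_eq_iff_eq_neg.mpr ?_).symm
    first
    | exact lie_lie_mul_lie_swap₁₂ _ _ _ _ _
    | exact lie_lie_mul_lie_swap₂₃ h _ _ _ _ _
    | exact lie_lie_mul_lie_swap₃₄ h _ _ _ _ _
    | exact lie_lie_mul_lie_swap₄₅ _ _ _ _ _

theorem lieLieMulLie_comp_perm (h : ∀ a b c d : A, ⁅⁅⁅a, b⁆, c⁆, d⁆ = 0) (σ : Equiv.Perm (Fin 5))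
    (a : Fin 5 → A) : lieLieMulLie (a ∘ σ) = Equiv.Perm.sign σ • lieLieMulLie a := by
  have hσ : σ ∈ Submonoid.closure (Set.range fun i : Fin 4 ↦ Equiv.swap i.castSucc i.succ) := by
    rw [Equiv.Perm.mclosure_swap_castSucc_succ]; trivial
  induction hσ using Submonoid.closure_induction generalizing a with
  | mem τ hτ =>
    obtain ⟨i, rfl⟩ := hτ
    rw [lieLieMulLie_comp_swap h, Equiv.Perm.sign_swap (Fin.castSucc_lt_succ (i := i)).ne,
      Units.neg_smul, one_smul]
  | one => simp
  | mul σ τ _ _ hσ hτ =>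
    rw [Equiv.Perm.coe_mul, ← Function.comp_assoc, hτ, hσ, smul_smul, Equiv.Perm.sign_mul, mul_comm]

end LieNilpotent

theorem map_br {S : Type*} [Ring S] (f : R →+* S) (x y : R) : f (br x y) = ⁅f x, f y⁆ := by
  rw [br, map_sub, map_mul, map_mul, Ring.lie_def]

theorem lie_lie_lie_eq_zero_quotient_T4 (p q r s : T4.ringCon.Quotient) : ⁅⁅⁅p, q⁆, r⁆, s⁆ = 0 := by
  obtain ⟨p, rfl⟩ := T4.ringCon.mk'_surjective p
  obtain ⟨q, rfl⟩ := T4.ringCon.mk'_surjective q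
  obtain ⟨r, rfl⟩ := T4.ringCon.mk'_surjective r
  obtain ⟨s, rfl⟩ := T4.ringCon.mk'_surjective s
  rw [← map_br, ← map_br, ← map_br, ← TwoSidedIdeal.mem_ker, TwoSidedIdeal.ker_ringCon_mk']
  exact TwoSidedIdeal.subset_span ⟨p, q, r, s, rfl⟩

theorem stmt2 (σ : Equiv.Perm (Fin 5)) (a : Fin 5 → R) :
    br (br (a 0) (a 1)) (a 2) * br (a 3) (a 4)
      - (Equiv.Perm.sign σ : ℤ) •
          (br (br (a (σ 0)) (a (σ 1))) (a (σ 2)) * br (a (σ 3)) (a (σ 4))) ∈ T4 := by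
  rw [← TwoSidedIdeal.ker_ringCon_mk' T4, TwoSidedIdeal.mem_ker]
  have h := lieLieMulLie_comp_perm lie_lie_lie_eq_zero_quotient_T4 σ (T4.ringCon.mk' ∘ a)
  simp only [lieLieMulLie, Function.comp_apply] at h
  simp only [map_sub, map_zsmul, map_mul, map_br, h, Units.smul_def, smul_smul, ← Units.val_mul,
    Int.units_mul_self, Units.val_one, one_smul, sub_self]
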